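/- For fixed m > 0, the function α ↦ P(α/2, m/2) is strictly increasing on (0, ∞), and is convex on the interval (0, m - 2] whenever m > 2. -/

import Mathlib

/-- Regularized lower incomplete gamma function. -/
noncomputable def P (x s : ℝ) : ℝ :=
  (Real.Gamma s)⁻¹ * ∫ t in (0:ℝ)..x, t ^ (s - 1) * Real.exp (-t)

/-! The derivative of `x ↦ P x s` is the Gamma density `x ^ (s - 1) * exp (-x) / Γ(s)`, which is
positive on `(0, ∞)` and increasing up to its mode `s - 1`; the substitution `x = a / 2` is linear,
so it preserves both strict monotonicity and convexity. -/

open Real Set intervalIntegral MeasureTheory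

lemma intervalIntegrable_rpow_mul_exp_neg {s a b : ℝ} (hs : 0 < s) (ha : 0 ≤ a) (hb : 0 ≤ b) :
    IntervalIntegrable (fun t => t ^ (s - 1) * exp (-t)) volume a b := by
  have h : IntegrableOn (fun t => t ^ (s - 1) * exp (-t)) (Ioi 0) := by
    simpa only [mul_comm] using GammaIntegral_convergent hs
  exact intervalIntegrable_iff.2 (h.mono_set fun t ht => lt_of_le_of_lt (le_min ha hb) ht.1)

lemma continuousAt_rpow_mul_exp_neg {x : ℝ} (s : ℝ) (hx : 0 < x) :
    ContinuousAt (fun t => t ^ (s - 1) * exp (-t)) x :=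
  (continuousAt_rpow_const x _ (Or.inl hx.ne')).mul (continuous_exp.comp continuous_neg).continuousAt

lemma hasDerivAt_P {s x : ℝ} (hs : 0 < s) (hx : 0 < x) :
    HasDerivAt (fun x => P x s) ((Gamma s)⁻¹ * (x ^ (s - 1) * exp (-x))) x := by
  have hmeas : StronglyMeasurableAtFilter (fun t => t ^ (s - 1) * exp (-t)) (nhds x) :=
    ContinuousOn.stronglyMeasurableAtFilter isOpen_Ioi
      (fun t ht => (continuousAt_rpow_mul_exp_neg s ht).continuousWithinAt) x hx
  exact (integral_hasDerivAt_right (intervalIntegrable_rpow_mul_exp_neg hs le_rfl hx.le) hmeas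
    (continuousAt_rpow_mul_exp_neg s hx)).const_mul _

lemma strictMonoOn_P {s : ℝ} (hs : 0 < s) : StrictMonoOn (fun x => P x s) (Ici 0) := by
  intro a ha b hb hab
  have hpos : 0 < ∫ t in a..b, t ^ (s - 1) * exp (-t) :=
    intervalIntegral_pos_of_pos_on (intervalIntegrable_rpow_mul_exp_neg hs ha hb)
      (fun t ht => have : 0 < t := lt_of_le_of_lt ha ht.1; by positivity) hab
  have hsub : P b s - P a s = (Gamma s)⁻¹ * ∫ t in a..b, t ^ (s - 1) * exp (-t) := by
    rw [P, P, ← mul_sub, integral_interval_sub_left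
      (intervalIntegrable_rpow_mul_exp_neg hs le_rfl hb)
      (intervalIntegrable_rpow_mul_exp_neg hs le_rfl ha)]
  have : 0 < P b s - P a s := hsub ▸ mul_pos (inv_pos.2 (Gamma_pos_of_pos hs)) hpos
  linarith

lemma monotoneOn_rpow_mul_exp_neg (c : ℝ) : MonotoneOn (fun t => t ^ c * exp (-t)) (Ioc 0 c) := by
  have hderiv : ∀ t, 0 < t → HasDerivAt (fun t => t ^ c * exp (-t))
      (t ^ (c - 1) * exp (-t) * (c - t)) t := by
    intro t ht
    refine ((hasDerivAt_rpow_const (Or.inl ht.ne')).mul (hasDerivAt_neg t).exp).congr_deriv ?_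
    rw [rpow_sub_one ht.ne']
    field_simp
    ring
  apply monotoneOn_of_deriv_nonneg (convex_Ioc 0 c)
  · exact fun t ht => (hderiv t ht.1).continuousAt.continuousWithinAt
  · rw [interior_Ioc]
    exact fun t ht => (hderiv t ht.1).differentiableAt.differentiableWithinAt
  · rw [interior_Ioc]
    intro t ht
    rw [(hderiv t ht.1).deriv]
    have ht0 : 0 < t := ht.1
    have hct : 0 ≤ c - t := by linarith [ht.2]
    positivity

lemma convexOn_P (s : ℝ) : ConvexOn ℝ (Ioc 0 (s - 1)) (fun x => P x s) := by
  have hderiv : ∀ x ∈ Ioc 0 (s - 1),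
      HasDerivAt (fun x => P x s) ((Gamma s)⁻¹ * (x ^ (s - 1) * exp (-x))) x :=
    fun x hx => hasDerivAt_P (by linarith [hx.1, hx.2]) hx.1
  apply MonotoneOn.convexOn_of_deriv (convex_Ioc 0 (s - 1))
  · exact fun x hx => (hderiv x hx).continuousAt.continuousWithinAt
  · rw [interior_Ioc]
    exact fun x hx => (hderiv x (Ioo_subset_Ioc_self hx)).differentiableAt.differentiableWithinAt
  · rw [interior_Ioc]
    intro x hx y hy hxy
    have hs : 0 < s := by linarith [hx.1, hx.2]
    rw [(hderiv x (Ioo_subset_Ioc_self hx)).deriv, (hderiv y (Ioo_subset_Ioc_self hy)).deriv]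
    exact mul_le_mul_of_nonneg_left
      (monotoneOn_rpow_mul_exp_neg (s - 1) (Ioo_subset_Ioc_self hx) (Ioo_subset_Ioc_self hy) hxy)
      (inv_nonneg.2 (Gamma_pos_of_pos hs).le)

theorem P_half_strictMono_and_convex (m : ℝ) (hm : 0 < m) :
    StrictMonoOn (fun a : ℝ => P (a / 2) (m / 2)) (Set.Ioi (0:ℝ)) ∧
    (2 < m → ConvexOn ℝ (Set.Ioc (0:ℝ) (m - 2)) (fun a : ℝ => P (a / 2) (m / 2))) := by
  refine ⟨?_, fun _ => ?_⟩
  · refine (strictMonoOn_P (half_pos hm)).comp (fun a _ b _ hab => by linarith) ?_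
    exact fun a (ha : 0 < a) => (half_pos ha).le
  · have hpre : LinearMap.mulRight ℝ (2⁻¹ : ℝ) ⁻¹' Ioc 0 (m / 2 - 1) = Ioc 0 (m - 2) := by
      ext a
      simp only [mem_preimage, mem_Ioc, LinearMap.mulRight_apply]
      constructor <;> intro h <;> constructor <;> linarith [h.1, h.2]
    have h := (convexOn_P (m / 2)).comp_linearMap (LinearMap.mulRight ℝ (2⁻¹ : ℝ))
    rw [hpre] at h
    exact h
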